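/- Let A be a bounded operator on a Hilbert space H, invertible with bounded everywhere-defined inverse, g ∈ H, and f = A⁻¹g. Then f belongs to the closure of K(A,g) if and only if the Krylov intersection I(A,g) = closure(K(A,g)) ∩ A(K(A,g)^⊥) equals {0}. -/

import Mathlib

/-!
Write `K = K(A,g)` and `K̄` for its closure; `K̄` is `A`-invariant and `Kᗮ = K̄ᗮ`.
If `A⁻¹g ∈ K̄`, then `A⁻¹` also preserves `K̄` (it sends `Aᵏ⁺¹g` to `Aᵏg`), so `Ay ∈ K̄` with
`y ⊥ K` forces `y = A⁻¹(Ay) ∈ K̄ ∩ K̄ᗮ = 0`. Conversely, split `A⁻¹g = f₁ + f₂` with `f₁ ∈ K̄`,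
`f₂ ∈ K̄ᗮ`: then `Af₂ = g - Af₁` lies in `K̄ ∩ A(Kᗮ) = 0`, so `f₂ = 0`.
-/

open Set Submodule

def krylovSubspace {R M : Type*} [Semiring R] [AddCommMonoid M] [Module R M] [TopologicalSpace M]
    (A : M →L[R] M) (g : M) : Submodule R M :=
  span R (range fun k : ℕ => (A ^ k) g)

section Krylov

variable {R M : Type*} [Semiring R] [AddCommMonoid M] [Module R M] [TopologicalSpace M]
  (A : M →L[R] M) (g : M)

theorem self_mem_krylovSubspace : g ∈ krylovSubspace A g :=
  subset_span ⟨0, by simp⟩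

theorem krylovSubspace_mapsTo : MapsTo A (krylovSubspace A g) (krylovSubspace A g) := by
  suffices krylovSubspace A g ≤ (krylovSubspace A g).comap (A : M →ₗ[R] M) from
    fun x hx => this hx
  refine span_le.mpr ?_
  rintro _ ⟨k, rfl⟩
  exact subset_span ⟨k + 1, by simp [pow_succ']⟩

theorem mapsTo_topologicalClosure_krylovSubspace_of_leftInverse [ContinuousAdd M]
    [ContinuousConstSMul R M] {B : M →L[R] M} (hBA : Function.LeftInverse B A)
    (hBg : B g ∈ (krylovSubspace A g).topologicalClosure) :
    MapsTo B (krylovSubspace A g).topologicalClosure (krylovSubspace A g).topologicalClosure := by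
  refine MapsTo.closure_left ?_ B.continuous (isClosed_topologicalClosure _)
  suffices krylovSubspace A g ≤ (krylovSubspace A g).topologicalClosure.comap (B : M →ₗ[R] M) from
    fun x hx => this hx
  refine span_le.mpr ?_
  rintro _ ⟨_ | k, rfl⟩
  · exact hBg
  · have hk : B ((A ^ (k + 1)) g) = (A ^ k) g := by rw [pow_succ']; exact hBA _
    show B ((A ^ (k + 1)) g) ∈ (krylovSubspace A g).topologicalClosure
    exact hk ▸ le_topologicalClosure _ (subset_span ⟨k, rfl⟩)

end Krylov

section Orthogonal

variable {𝕜 E : Type*} [RCLike 𝕜] [NormedAddCommGroup E] [InnerProductSpace 𝕜 E]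
  {K : Submodule 𝕜 E} {A : E →ₗ[𝕜] E}

theorem inter_image_orthogonal_eq_zero {B : E → E} (hBA : Function.LeftInverse B A)
    (hBK : MapsTo B K K) : (K : Set E) ∩ A '' Kᗮ = {0} := by
  refine subset_antisymm ?_ ?_
  · rintro _ ⟨hx, y, hy, rfl⟩
    have hyK : y ∈ K := hBA y ▸ hBK hx
    simp [disjoint_def.mp K.orthogonal_disjoint y hyK hy]
  · rintro _ rfl
    exact ⟨zero_mem K, 0, zero_mem _, map_zero A⟩

theorem mem_of_inter_image_orthogonal_subset [K.HasOrthogonalProjection]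
    (hA : Function.Injective A) (hAK : MapsTo A K K) {f : E} (hAf : A f ∈ K)
    (hI : (K : Set E) ∩ A '' Kᗮ ⊆ {0}) : f ∈ K := by
  obtain ⟨y, hy, z, hz, rfl⟩ := K.exists_add_mem_mem_orthogonal f
  have hAz : A z ∈ K := by simpa using sub_mem hAf (hAK hy)
  have hz : z = 0 := hA <| by simpa using hI ⟨hAz, z, hz, rfl⟩
  simpa [hz] using hy

end Orthogonal

/-- If `A` is bounded and boundedly invertible (with inverse `B`), then the solution
`f = A⁻¹ g = B g` belongs to the closure of `K(A,g)` if and only if the Krylov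
intersection `I(A,g) = closure(K(A,g)) ∩ A(K(A,g)^⊥)` is trivial. -/
theorem stmt6 {H : Type*} [NormedAddCommGroup H] [InnerProductSpace ℂ H] [CompleteSpace H]
    (A B : H →L[ℂ] H)
    (hAB : A.comp B = ContinuousLinearMap.id ℂ H)
    (hBA : B.comp A = ContinuousLinearMap.id ℂ H)
    (g : H) :
    B g ∈ closure ((Submodule.span ℂ (Set.range fun k : ℕ => (A ^ k) g)) : Set H)
    ↔ closure ((Submodule.span ℂ (Set.range fun k : ℕ => (A ^ k) g)) : Set H)
        ∩ (A '' ((Submodule.span ℂ (Set.range fun k : ℕ => (A ^ k) g))ᗮ : Set H)) = {0} := by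
  set K := krylovSubspace A g
  change B g ∈ closure (K : Set H) ↔ closure (K : Set H) ∩ A '' Kᗮ = {0}
  rw [← orthogonal_closure, ← topologicalClosure_coe]
  have hBA' : Function.LeftInverse B A := fun x => congr($hBA x)
  have hABg : A (B g) = g := congr($hAB g)
  constructor
  · exact fun hBg => inter_image_orthogonal_eq_zero (A := (A : H →ₗ[ℂ] H)) hBA'
      (mapsTo_topologicalClosure_krylovSubspace_of_leftInverse A g hBA' hBg)
  · refine fun hI => mem_of_inter_image_orthogonal_subset (A := (A : H →ₗ[ℂ] H)) hBA'.injective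
      ((krylovSubspace_mapsTo A g).closure A.continuous) ?_ hI.subset
    simpa [hABg] using K.le_topologicalClosure (self_mem_krylovSubspace A g)
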